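/- If G is a star consisting of one center node adjacent to n leaf nodes (and no other edges), then CIM_G is a simplex of dimension 2^n − n − 1. -/

import Mathlib

open Classical

/-- A DAG on vertex type `V`: a directed graph (adjacency relation) with no directed cycles. -/
structure DAG (V : Type) where
  adj : V → V → Prop
  acyclic : ∀ v, ¬ Relation.TransGen adj v v

namespace DAG

variable {V : Type}

/-- The skeleton of a DAG: the undirected graph obtained by forgetting directions. -/
def skeleton (D : DAG V) : SimpleGraph V where
  Adj i j := D.adj i j ∨ D.adj j i
  symm := by refine ⟨?_⟩; intro i j h; exact h.symm
  loopless := by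
    refine ⟨?_⟩
    intro i h
    rcases h with h | h <;> exact D.acyclic i (Relation.TransGen.single h)

/-- The characteristic imset of a DAG, as a vector indexed by finite vertex sets
(coordinates on sets of size `< 2` are identically zero). -/
noncomputable def imset (D : DAG V) (S : Finset V) : ℝ :=
  if 2 ≤ S.card ∧ ∃ i ∈ S, ∀ j ∈ S, j ≠ i → D.adj j i then 1 else 0

/-- `D.IsVStructure i j k` means `i → j ← k` is an induced subgraph of `D`
(`i` and `k` non-adjacent). -/
def IsVStructure (D : DAG V) (i j k : V) : Prop :=
  i ≠ k ∧ D.adj i j ∧ D.adj k j ∧ ¬ D.adj i k ∧ ¬ D.adj k i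

end DAG

/-- Two DAGs are Markov equivalent iff they have the same skeleton and the same
v-structures. -/
def MarkovEquiv {V : Type} (D E : DAG V) : Prop :=
  D.skeleton = E.skeleton ∧ ∀ i j k, D.IsVStructure i j k ↔ E.IsVStructure i j k

/-- An arrow `i → j` of `D` is essential if it occurs in every DAG Markov equivalent to `D`. -/
def DAG.Essential {V : Type} (D : DAG V) (i j : V) : Prop :=
  D.adj i j ∧ ∀ E : DAG V, MarkovEquiv D E → E.adj i j

/-- The characteristic imset polytope of an undirected graph `G`: the convex hull of the
characteristic imsets of all DAGs with skeleton `G`. -/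
noncomputable def CIM {V : Type} (G : SimpleGraph V) : Set (Finset V → ℝ) :=
  convexHull ℝ { f | ∃ D : DAG V, D.skeleton = G ∧ f = D.imset }

/-- `conv(u,v)` is an edge (one-dimensional face) of `P`: there is a linear functional whose
maximum over `P` is attained exactly on the segment from `u` to `v`. -/
def IsPolytopeEdge {E : Type*} [AddCommGroup E] [Module ℝ E] (P : Set E) (u v : E) : Prop :=
  u ≠ v ∧ ∃ φ : E →ₗ[ℝ] ℝ, (∀ x ∈ P, φ x ≤ φ u) ∧ ∀ x ∈ P, (φ x = φ u ↔ x ∈ segment ℝ u v)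

/-- `P` is a simplex of dimension `d`: the convex hull of `d+1` affinely independent points. -/
def IsSimplexOfDim {E : Type*} [AddCommGroup E] [Module ℝ E] (P : Set E) (d : ℕ) : Prop :=
  ∃ pts : Fin (d + 1) → E, AffineIndependent ℝ pts ∧ P = convexHull ℝ (Set.range pts)

/-- The standard basis vector indexed by `S`. -/
noncomputable def eVec {V : Type} (S : Finset V) : Finset V → ℝ :=
  fun T => if T = S then 1 else 0

/-- The star graph with center `none` and the `n` leaves `some a`, `a : Fin n`. -/
def starGraph (n : ℕ) : SimpleGraph (Option (Fin n)) where
  Adj i j := (i = none ∧ j ≠ none) ∨ (j = none ∧ i ≠ none)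
  symm := by refine ⟨?_⟩; rintro i j (⟨h1, h2⟩ | ⟨h1, h2⟩)
             · exact Or.inr ⟨h1, h2⟩
             · exact Or.inl ⟨h1, h2⟩
  loopless := by refine ⟨?_⟩; rintro i (⟨h1, h2⟩ | ⟨h1, h2⟩) <;> exact h2 h1

/-!
A DAG with the star as skeleton is determined by the set `A` of leaves pointing to the
center `c = none`, and its characteristic imset is `1` exactly on the edges and on the sets
`{c} ∪ B` with `2 ≤ |B|` and `B ⊆ A`. For `|A| ≤ 1` this is the imset of `A = ∅`, which
leaves `2^n - n` distinct vertices. Evaluated at the coordinates `{c} ∪ B`, the differences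
from the `A = ∅` vertex form a unitriangular system for inclusion, so the vertices are
affinely independent.
-/

theorem Relation.not_transGen_self_of_lt_comp {α : Type*} {r : α → α → Prop} (h : α → ℕ)
    (hr : ∀ a b, r a b → h a < h b) (a : α) : ¬ Relation.TransGen r a a := fun ha => by
  have := ha.lift h hr
  rw [Relation.transGen_eq_self] at this
  exact lt_irrefl _ this

theorem linearIndependent_of_apply_triangular {ι κ R : Type*} [Ring R] [NoZeroDivisors R]
    (v : ι → κ → R) (p : ι → κ) (rank : ι → ℕ) (hdiag : ∀ i, v i (p i) ≠ 0)
    (htri : ∀ i j, j ≠ i → v j (p i) ≠ 0 → rank i < rank j) : LinearIndependent R v := by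
  rw [linearIndependent_iff']
  intro s c hsum i hi
  by_contra hci
  obtain ⟨i₀, hi₀, hmax⟩ :=
    (s.filter (c · ≠ 0)).exists_max_image rank ⟨i, Finset.mem_filter.2 ⟨hi, hci⟩⟩
  rw [Finset.mem_filter] at hi₀
  have hsum_eq : ∑ j ∈ s, c j * v j (p i₀) = c i₀ * v i₀ (p i₀) := by
    refine Finset.sum_eq_single i₀ (fun j hj hne => ?_) (fun h => absurd hi₀.1 h)
    by_cases hcj : c j = 0
    · rw [hcj, zero_mul]
    by_contra hv
    have hle := hmax j (Finset.mem_filter.2 ⟨hj, hcj⟩)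
    have hlt := htri i₀ j hne (right_ne_zero_of_mul hv)
    omega
  have h0 := congrFun hsum (p i₀)
  simp only [Finset.sum_apply, Pi.smul_apply, smul_eq_mul, Pi.zero_apply, hsum_eq] at h0
  exact mul_ne_zero hi₀.2 (hdiag i₀) h0

namespace DAG

variable {V : Type}

theorem imset_of_card_lt_two (D : DAG V) {S : Finset V} (hS : S.card < 2) : D.imset S = 0 :=
  if_neg fun h => by omega

theorem imset_pair [DecidableEq V] (D : DAG V) {i j : V} (hij : i ≠ j) :
    D.imset {i, j} = if D.skeleton.Adj i j then 1 else 0 := by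
  unfold imset
  congr 1
  simp [Finset.card_pair hij, skeleton, hij, hij.symm, or_comm]

end DAG

section Star

variable {n : ℕ}

def starAdj (A : Finset (Fin n)) : Option (Fin n) → Option (Fin n) → Prop
  | some a, none => a ∈ A
  | none, some a => a ∉ A
  | _, _ => False

def starDAG (A : Finset (Fin n)) : DAG (Option (Fin n)) where
  adj := starAdj A
  acyclic := Relation.not_transGen_self_of_lt_comp
    (fun | some a => if a ∈ A then 0 else 2 | none => 1)
    (by rintro (_ | a) (_ | b) h <;> simp_all [starAdj])

theorem skeleton_starDAG (A : Finset (Fin n)) : (starDAG A).skeleton = starGraph n := by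
  ext (_ | a) (_ | b) <;> simp [DAG.skeleton, starDAG, starAdj, starGraph, _root_.em, or_comm]

theorem eq_starDAG_of_skeleton_eq {D : DAG (Option (Fin n))} (hD : D.skeleton = starGraph n) :
    D = starDAG {a | D.adj (some a) none} := by
  have hskel : ∀ i j, D.adj i j ∨ D.adj j i ↔ (starGraph n).Adj i j := fun i j => by
    rw [← hD]; rfl
  have hasymm : ∀ i j, D.adj i j → ¬ D.adj j i := fun i j hij hji =>
    D.acyclic i (.tail (.single hij) hji)
  cases D with
  | mk adj acyclic =>
    simp only [starDAG, DAG.mk.injEq]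
    funext i j
    apply propext
    rcases i with _ | a <;> rcases j with _ | b
    · simpa [starAdj, starGraph] using hskel none none
    · have hadj : adj none (some b) ∨ adj (some b) none := by
        simpa [starGraph] using hskel none (some b)
      simpa [starAdj] using ⟨hasymm _ _, hadj.resolve_right⟩
    · simp [starAdj]
    · simpa [starAdj, starGraph] using fun h => (hskel (some a) (some b)).1 (.inl h)

theorem imset_starDAG_of_three_le_card (A : Finset (Fin n)) {S : Finset (Option (Fin n))}
    (hS : 3 ≤ S.card) :
    (starDAG A).imset S = if none ∈ S ∧ S ⊆ insert none (A.map .some) then 1 else 0 := by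
  unfold DAG.imset
  congr 1
  apply propext
  constructor
  · rintro ⟨-, (_ | a), hi, hpar⟩
    · refine ⟨hi, fun j hj => ?_⟩
      rcases j with _ | b
      · exact Finset.mem_insert_self _ _
      · simpa [starDAG, starAdj] using hpar (some b) hj (by simp)
    · -- a leaf has at most the center as parent, so its family is an edge
      have hsub : S ⊆ {none, some a} := fun j hj => by
        rcases j with _ | b
        · simp
        · by_contra hb
          simpa [starDAG, starAdj] using hpar (some b) hj (by simpa using hb)
      have := (Finset.card_le_card hsub).trans Finset.card_le_two
      omega
  · rintro ⟨hnone, hsub⟩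
    refine ⟨by omega, none, hnone, fun j hj hne => ?_⟩
    rcases j with _ | b
    · exact absurd rfl hne
    · simpa [starDAG, starAdj] using hsub hj

theorem imset_starDAG_insert_none (A : Finset (Fin n)) {B : Finset (Fin n)} (hB : 2 ≤ B.card) :
    (starDAG A).imset (insert none (B.map .some)) = if B ⊆ A then 1 else 0 := by
  have hnone : none ∉ B.map Function.Embedding.some := by simp
  rw [imset_starDAG_of_three_le_card]
  · simp [Finset.insert_subset_insert_iff hnone]
  · rw [Finset.card_insert_of_notMem hnone, Finset.card_map]
    omega

theorem imset_starDAG_eq_of_card_le_one {A : Finset (Fin n)} (hA : A.card ≤ 1) :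
    (starDAG A).imset = (starDAG ∅).imset := by
  funext S
  obtain hS | hS | hS : S.card < 2 ∨ S.card = 2 ∨ 3 ≤ S.card := by omega
  · rw [DAG.imset_of_card_lt_two _ hS, DAG.imset_of_card_lt_two _ hS]
  · obtain ⟨i, j, hij, rfl⟩ := Finset.card_eq_two.1 hS
    rw [DAG.imset_pair _ hij, DAG.imset_pair _ hij, skeleton_starDAG, skeleton_starDAG]
  · have hsmall : ∀ B : Finset (Fin n), B.card ≤ 1 → ¬ S ⊆ insert none (B.map .some) :=
      fun B hB hsub => by
        have := (Finset.card_le_card hsub).trans (Finset.card_insert_le _ _)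
        rw [Finset.card_map] at this
        omega
    rw [imset_starDAG_of_three_le_card _ hS, imset_starDAG_of_three_le_card _ hS,
      if_neg fun h => hsmall A hA h.2, if_neg fun h => hsmall ∅ (by simp) h.2]

theorem setOf_imset_eq_range_starDAG :
    {f | ∃ D : DAG (Option (Fin n)), D.skeleton = starGraph n ∧ f = D.imset} =
      Set.range fun A : {A : Finset (Fin n) // A.card ≠ 1} => (starDAG A.1).imset := by
  ext f
  constructor
  · rintro ⟨D, hD, rfl⟩
    rw [eq_starDAG_of_skeleton_eq hD]
    set A : Finset (Fin n) := {a | D.adj (some a) none}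
    by_cases hA : A.card = 1
    · exact ⟨⟨∅, by simp⟩, (imset_starDAG_eq_of_card_le_one hA.le).symm⟩
    · exact ⟨⟨A, hA⟩, rfl⟩
  · rintro ⟨A, rfl⟩
    exact ⟨starDAG A.1, skeleton_starDAG A.1, rfl⟩

theorem affineIndependent_imset_starDAG :
    AffineIndependent ℝ fun A : {A : Finset (Fin n) // A.card ≠ 1} => (starDAG A.1).imset := by
  rw [affineIndependent_iff_linearIndependent_vsub ℝ _ ⟨∅, by simp⟩]
  have two_le : ∀ A : {A : {A : Finset (Fin n) // A.card ≠ 1} // A ≠ ⟨∅, by simp⟩},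
      2 ≤ A.1.1.card := fun ⟨⟨A, hA1⟩, hA0⟩ => by
    show 2 ≤ A.card
    have : A.card ≠ 0 := fun h => hA0 (Subtype.ext (Finset.card_eq_zero.1 h))
    omega
  have not_subset_empty :
      ∀ A : {A : {A : Finset (Fin n) // A.card ≠ 1} // A ≠ ⟨∅, by simp⟩}, ¬ A.1.1 ⊆ ∅ :=
    fun A h => by simpa [Finset.subset_empty.1 h] using two_le A
  refine linearIndependent_of_apply_triangular _ (fun A => insert none (A.1.1.map .some))
    (fun A => A.1.1.card) (fun A => ?_) (fun A B hne hBA => ?_)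
  · simp [imset_starDAG_insert_none _ (two_le A), not_subset_empty A]
  · simp only [vsub_eq_sub, Pi.sub_apply, imset_starDAG_insert_none _ (two_le A),
      if_neg (not_subset_empty A), sub_zero, ne_eq, ite_eq_right_iff, one_ne_zero] at hBA
    refine Finset.card_lt_card (LE.le.ssubset_of_ne (of_not_not hBA) fun h => ?_)
    exact hne (Subtype.ext (Subtype.ext h)).symm

theorem card_finset_card_ne_one :
    Fintype.card {A : Finset (Fin n) // A.card ≠ 1} = 2 ^ n - n := by
  rw [Fintype.card_subtype_compl, Fintype.card_finset, Fintype.card_fin, Fintype.card_subtype,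
    Finset.univ_filter_card_eq, Finset.card_powersetCard, Finset.card_univ, Fintype.card_fin,
    Nat.choose_one_right]

end Star

/-- **CIM of a star is a simplex.**  If `G` is a star with one center adjacent to `n` leaves
(and no other edges), then `CIM_G` is a simplex of dimension `2^n - n - 1`. -/
theorem cim_star_simplex (n : ℕ) :
    IsSimplexOfDim (CIM (starGraph n)) (2 ^ n - n - 1) := by
  have hcard : Fintype.card {A : Finset (Fin n) // A.card ≠ 1} = 2 ^ n - n - 1 + 1 := by
    have hn := n.lt_two_pow_self
    rw [card_finset_card_ne_one]
    omega
  let e := (Fintype.equivFinOfCardEq hcard).symm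
  refine ⟨_ ∘ e, affineIndependent_imset_starDAG.comp_embedding e.toEmbedding, ?_⟩
  rw [CIM, setOf_imset_eq_range_starDAG, Set.range_comp, e.range_eq_univ, Set.image_univ]
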